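/- Let G be a graph, let Γ be a group acting on V(G) by graph automorphisms, let H be the quotient graph G/Γ, and let π : V(G) → V(H) denote the quotient map x ↦ Γx. If the action of Γ on V(G) is free, then π has the disjoint tree-lifting property. -/

import Mathlib

open MeasureTheory

namespace Percolation

variable {V : Type*} {W : Type*}

/-- The ball of radius `k` around `x` for the graph distance. -/
def ball (G : SimpleGraph V) (x : V) (k : ℕ) : Set V := {y | G.dist x y ≤ k}

/-- The sphere of radius `k` around `x` for the graph distance. -/
def sphere (G : SimpleGraph V) (x : V) (k : ℕ) : Set V := {y | G.dist x y = k}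

/-- A graph is locally finite if every vertex has finitely many neighbours. -/
def LocallyFinite' (G : SimpleGraph V) : Prop := ∀ v : V, (G.neighborSet v).Finite

/-- A graph has bounded degree if there is a uniform finite bound on the number of
neighbours of any vertex. -/
def BoundedDegree (G : SimpleGraph V) : Prop :=
  ∃ D : ℕ, ∀ v : V, (G.neighborSet v).Finite ∧ (G.neighborSet v).ncard ≤ D

/-- A graph is quasi-transitive if the action of its automorphism group on its vertices
has finitely many orbits. -/
def QuasiTransitive (G : SimpleGraph V) : Prop :=
  ∃ S : Set V, S.Finite ∧ ∀ v : V, ∃ s ∈ S, ∃ φ : G ≃g G, φ s = v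

/-- The graph of `ω`-open edges of a percolation configuration `ω` on `G`. -/
def openGraph (G : SimpleGraph V) (ω : G.edgeSet → Bool) : SimpleGraph V where
  Adj x y := ∃ h : G.Adj x y, ω ⟨s(x, y), (SimpleGraph.mem_edgeSet G).mpr h⟩ = true
  symm := by
    constructor
    rintro x y ⟨h, hw⟩
    refine ⟨h.symm, ?_⟩
    have heq : (⟨s(y, x), (SimpleGraph.mem_edgeSet G).mpr h.symm⟩ : G.edgeSet)
        = ⟨s(x, y), (SimpleGraph.mem_edgeSet G).mpr h⟩ := Subtype.ext (Sym2.eq_swap)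
    rw [heq]; exact hw
  loopless := by constructor; rintro x ⟨h, -⟩; exact G.irrefl h

/-- The open cluster of the vertex `x` in the configuration `ω`. -/
def cluster (G : SimpleGraph V) (ω : G.edgeSet → Bool) (x : V) : Set V :=
  {y | (openGraph G ω).Reachable x y}

/-- The open cluster of a set `A` of vertices in the configuration `ω`. -/
def clusterOf (G : SimpleGraph V) (ω : G.edgeSet → Bool) (A : Set V) : Set V :=
  {y | ∃ x ∈ A, (openGraph G ω).Reachable x y}

/-- The event that some open path intersects both `A` and `B`. -/
def connectedEvent (G : SimpleGraph V) (A B : Set V) : Set (G.edgeSet → Bool) :=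
  {ω | ∃ a ∈ A, ∃ b ∈ B, (openGraph G ω).Reachable a b}

/-- `μ` is the Bernoulli product measure `⊗_{i ∈ ι} Ber(p)` on `ι → Bool`:
a probability measure giving every finite cylinder event its product probability. -/
def IsBernoulliProduct {ι : Type*} (p : ℝ) (μ : Measure (ι → Bool)) : Prop :=
  IsProbabilityMeasure μ ∧
    ∀ (t : Finset ι) (f : ι → Bool),
      μ {ω | ∀ i ∈ t, ω i = f i} =
        ∏ i ∈ t, ENNReal.ofReal (if f i then p else 1 - p)

/-- `μ` is the product measure `Ber(p)^{⊗ι} ⊗ Ber(s)^{⊗κ}` on `(ι → Bool) × (κ → Bool)`. -/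
def IsBernoulliPair {ι κ : Type*} (p s : ℝ)
    (μ : Measure ((ι → Bool) × (κ → Bool))) : Prop :=
  IsProbabilityMeasure μ ∧
    ∀ (t : Finset ι) (u : Finset κ) (f : ι → Bool) (g : κ → Bool),
      μ {c | (∀ i ∈ t, c.1 i = f i) ∧ (∀ j ∈ u, c.2 j = g j)} =
        (∏ i ∈ t, ENNReal.ofReal (if f i then p else 1 - p)) *
          ∏ j ∈ u, ENNReal.ofReal (if g j then s else 1 - s)

/-- The critical parameter `p_c` of a graph: the infimum of those `p ∈ [0,1]` for which
Bernoulli(p) bond percolation produces an infinite cluster with positive probability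
(with the convention that it equals `1` when no such `p` exists). -/
noncomputable def pc (G : SimpleGraph V) : ℝ :=
  sInf ({p : ℝ | p ∈ Set.Icc (0 : ℝ) 1 ∧
    ∀ μ : Measure (G.edgeSet → Bool), IsBernoulliProduct p μ →
      0 < μ {ω | ∃ x : V, (cluster G ω x).Infinite}} ∪ {1})

/-- The uniqueness parameter `p_u` of a graph: the infimum of those `p ∈ [0,1]` for which
Bernoulli(p) bond percolation produces exactly one infinite cluster almost surely
(with the convention that it equals `1` when no such `p` exists). -/
noncomputable def pu (G : SimpleGraph V) : ℝ :=
  sInf ({p : ℝ | p ∈ Set.Icc (0 : ℝ) 1 ∧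
    ∀ μ : Measure (G.edgeSet → Bool), IsBernoulliProduct p μ →
      μ {ω | ∃! C : (openGraph G ω).ConnectedComponent, C.supp.Infinite} = 1} ∪ {1})

/-- A weak covering map: 1-Lipschitz for the graph distances, and every edge at `π x`
lifts to an edge at `x`. -/
structure IsWeakCover (G : SimpleGraph V) (H : SimpleGraph W) (π : V → W) : Prop where
  lipschitz : ∀ x y : V, H.dist (π x) (π y) ≤ G.dist x y
  lift : ∀ x : V, ∀ u : W, H.Adj (π x) u → ∃ y : V, G.Adj x y ∧ π y = u

/-- A strong covering map: 1-Lipschitz for the graph distances, and every edge at `π x`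
lifts to a *unique* edge at `x`. -/
structure IsStrongCover (G : SimpleGraph V) (H : SimpleGraph W) (π : V → W) : Prop where
  lipschitz : ∀ x y : V, H.dist (π x) (π y) ≤ G.dist x y
  lift : ∀ x : V, ∀ u : W, H.Adj (π x) u → ∃! y : V, G.Adj x y ∧ π y = u

/-- `π` has tame fibres: for some `R`, every vertex has another vertex of its fibre
within distance `R`. -/
def TameFibres (G : SimpleGraph V) (π : V → W) : Prop :=
  ∃ R : ℕ, ∀ x : V, ∃ y : V, π x = π y ∧ 0 < G.dist x y ∧ G.dist x y ≤ R

/-- `π` has bounded fibres: fibres have uniformly bounded diameter. -/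
def BoundedFibres (G : SimpleGraph V) (π : V → W) : Prop :=
  ∃ K : ℕ, ∀ x y : V, π x = π y → G.dist x y ≤ K

/-- `T'` is a lift of the subtree `T` through `π`: a subtree of `G` such that `π` induces
a graph isomorphism from `T'` onto `T`. -/
def IsLift (G : SimpleGraph V) (H : SimpleGraph W) (π : V → W)
    (T : H.Subgraph) (T' : G.Subgraph) : Prop :=
  T'.coe.IsTree ∧ Set.BijOn π T'.verts T.verts ∧
    ∀ x y : V, x ∈ T'.verts → y ∈ T'.verts → (T'.Adj x y ↔ T.Adj (π x) (π y))

/-- The disjoint tree-lifting property of `π`. -/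
def HasDisjointTreeLifting (G : SimpleGraph V) (H : SimpleGraph W) (π : V → W) : Prop :=
  ∀ T : H.Subgraph, T.coe.IsTree →
    ∀ x y : V, x ≠ y → π x = π y → π x ∈ T.verts →
      ∃ Tx Ty : G.Subgraph, IsLift G H π T Tx ∧ IsLift G H π T Ty ∧
        x ∈ Tx.verts ∧ y ∈ Ty.verts ∧ Disjoint Tx.verts Ty.verts

/-- All edges with both endpoints in the ball `B_r(u)` are `ω`-open. -/
def fullyOpen (H : SimpleGraph V) (r : ℕ) (ω : H.edgeSet → Bool) (u : V) : Prop :=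
  ∀ e : H.edgeSet, (∀ z ∈ (e : Sym2 V), H.dist u z ≤ r) → ω e = true

/-- The enhancement step: add all vertices `v` at distance exactly `r+1` from a vertex
`u` of `S` whose `r`-ball is fully open and with `α u = 1`. -/
def enhance (H : SimpleGraph V) (r : ℕ) (ω : H.edgeSet → Bool) (α : V → Bool)
    (S : Set V) : Set V :=
  S ∪ {v | ∃ u ∈ S, H.dist u v = r + 1 ∧ fullyOpen H r ω u ∧ α u = true}

/-- The sequence `C_n` of the enhanced exploration started from `A`: odd steps spread
along open clusters, even steps perform the enhancement. -/
def enhSeq (H : SimpleGraph V) (r : ℕ) (ω : H.edgeSet → Bool) (α : V → Bool)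
    (A : Set V) : ℕ → Set V
  | 0 => A
  | n + 1 =>
      if n % 2 = 0 then clusterOf H ω (enhSeq H r ω α A n)
      else enhance H r ω α (enhSeq H r ω α A n)

/-- The enhanced cluster `C_A(ω, α)`. -/
def enhCluster (H : SimpleGraph V) (r : ℕ) (ω : H.edgeSet → Bool) (α : V → Bool)
    (A : Set V) : Set V := ⋃ n, enhSeq H r ω α A n

open scoped Classical in
/-- Set the state of the edge `e` to `b`. -/
noncomputable def flipE (H : SimpleGraph V) (ω : H.edgeSet → Bool) (e : H.edgeSet)
    (b : Bool) : H.edgeSet → Bool := Function.update ω e b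

open scoped Classical in
/-- Set the state of the vertex `v` to `b`. -/
noncomputable def flipV (α : V → Bool) (v : V) (b : Bool) : V → Bool :=
  Function.update α v b

/-- The edge `e` is p-pivotal for the event `E` in the configuration `c`. -/
def PPivotal (H : SimpleGraph V) (E : Set ((H.edgeSet → Bool) × (V → Bool)))
    (e : H.edgeSet) (c : (H.edgeSet → Bool) × (V → Bool)) : Prop :=
  (flipE H c.1 e true, c.2) ∈ E ∧ (flipE H c.1 e false, c.2) ∉ E

/-- The vertex `z` is s-pivotal for the event `E` in the configuration `c`. -/
def SPivotal (H : SimpleGraph V) (E : Set ((H.edgeSet → Bool) × (V → Bool)))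
    (z : V) (c : (H.edgeSet → Bool) × (V → Bool)) : Prop :=
  (c.1, flipV c.2 z true) ∈ E ∧ (c.1, flipV c.2 z false) ∉ E

/-- For an edge `e = {x,y}`, the set `B_R(e) = B_R(x) ∪ B_R(y)`. -/
def edgeBall (H : SimpleGraph V) (e : H.edgeSet) (R : ℕ) : Set V :=
  {z | ∃ w ∈ (e : Sym2 V), H.dist w z ≤ R}

/-- The connected component of `x` inside the subgraph of `G` induced by `S`
(as a subset of the vertices of `G`). -/
def compIn (G : SimpleGraph V) (S : Set V) (x : V) : Set V :=
  {y | ∃ w : G.Walk x y, ∀ z ∈ w.support, z ∈ S}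

/-- The quotient graph `G/Γ`: vertices are the orbits, two distinct orbits being adjacent
iff some edge of `G` intersects both. -/
def quotientGraph (G : SimpleGraph V) (Γ : Type*) [Group Γ] [MulAction Γ V] :
    SimpleGraph (Quotient (MulAction.orbitRel Γ V)) where
  Adj a b := a ≠ b ∧ ∃ x y : V, G.Adj x y ∧
      Quotient.mk (MulAction.orbitRel Γ V) x = a ∧ Quotient.mk (MulAction.orbitRel Γ V) y = b
  symm := by constructor; rintro a b ⟨hne, x, y, hxy, hx, hy⟩; exact ⟨hne.symm, y, x, hxy.symm, hy, hx⟩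
  loopless := by constructor; rintro a ⟨hne, -⟩; exact hne rfl

open scoped Classical in
/-- The configuration `ω_L`: agrees with `ω` on edges inside `B_L(o)`, closed elsewhere. -/
noncomputable def truncE (H : SimpleGraph V) (o : V) (L : ℕ) (ω : H.edgeSet → Bool) :
    H.edgeSet → Bool :=
  fun e => if ∀ z ∈ (e : Sym2 V), H.dist o z ≤ L then ω e else false

/-- The configuration `α_L`: agrees with `α` on vertices of `B_L(o)`, `0` elsewhere. -/
noncomputable def truncV (H : SimpleGraph V) (o : V) (L : ℕ) (α : V → Bool) : V → Bool :=
  fun v => if H.dist o v ≤ L then α v else false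

/-- `B` is `r`-nice: finite, non-empty, and every vertex outside of `B` belongs to some
`r`-ball avoiding `B`. -/
def RNice (H : SimpleGraph V) (r : ℕ) (B : Set V) : Prop :=
  B.Finite ∧ B.Nonempty ∧ ∀ u ∉ B, ∃ v : V, u ∈ ball H v r ∧ ∀ w ∈ ball H v r, w ∉ B

/-!
Every edge of `G/Γ` at `Γz` lifts to an edge of `G` at `z`, because `Γ` acts by automorphisms.
Lifting a subtree `T` step by step along its unique paths from the root `Γx` therefore gives
a homomorphism `f` from `T` to `G` through `x` with `π ∘ f = id`, whose image is a lift `T_x`.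
If `y = g • x`, the translate `g • T_x` is a lift through `y`; since `T_x` meets each orbit only
once, a common vertex `z = g • z'` of the two would force `z = z'`, i.e. `g` would fix `z`.
-/

section TreeLifting

open SimpleGraph

variable {S : Type*} {Q : SimpleGraph S} {G : SimpleGraph V}

lemma _root_.SimpleGraph.IsAcyclic.eq_concat_or_eq_concat (hQ : Q.IsAcyclic) {r u u' : S}
    {p : Q.Walk r u} {p' : Q.Walk r u'} (hp : p.IsPath) (hp' : p'.IsPath) (h : Q.Adj u u') :
    p' = p.concat h ∨ p = p'.concat h.symm := by
  by_cases hu : u ∈ p'.support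
  · exact .inl (hQ.path_concat hp hp' h hu)
  · exact .inr (hQ.path_concat hp' hp h.symm
      (hQ.mem_support_of_ne_mem_support_of_adj_of_isPath hp hp' h hu))

def _root_.SimpleGraph.Walk.liftEnd (step : V → S → V) : ∀ {a b : S}, Q.Walk a b → V → V
  | _, _, .nil, z => z
  | _, _, .cons (v := c) _ p, z => p.liftEnd step (step z c)

lemma _root_.SimpleGraph.Walk.liftEnd_concat (step : V → S → V) {a b c : S} (p : Q.Walk a b)
    (h : Q.Adj b c) (z : V) : (p.concat h).liftEnd step z = step (p.liftEnd step z) c := by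
  induction p generalizing z with
  | nil => rfl
  | cons _ p ih => exact ih h _

lemma _root_.SimpleGraph.Walk.liftEnd_mem {R : V → S → Prop} {step : V → S → V}
    (hstep : ∀ z u u', R z u → Q.Adj u u' → R (step z u') u') {a b : S} (p : Q.Walk a b)
    {z : V} (hz : R z a) : R (p.liftEnd step z) b := by
  induction p generalizing z with
  | nil => exact hz
  | cons h p ih => exact ih (hstep _ _ _ hz h)

theorem _root_.SimpleGraph.IsTree.exists_hom_lift (hQ : Q.IsTree) (R : V → S → Prop)
    (hR : ∀ z u u', R z u → Q.Adj u u' → ∃ z', G.Adj z z' ∧ R z' u') {r : S} {x : V}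
    (hx : R x r) : ∃ f : Q →g G, f r = x ∧ ∀ u, R (f u) u := by
  -- the `u` below `z` is quantified inside, so that `step z u'` does not depend on it
  have hstep : ∀ z u', ∃ z', (∃ u, R z u ∧ Q.Adj u u') → G.Adj z z' ∧ R z' u' := by
    intro z u'
    by_cases h : ∃ u, R z u ∧ Q.Adj u u'
    · obtain ⟨u, hzu, hu⟩ := h
      obtain ⟨z', hz'⟩ := hR z u u' hzu hu
      exact ⟨z', fun _ => hz'⟩
    · exact ⟨z, fun h' => absurd h' h⟩
  choose step hstep using hstep
  choose path path_isPath path_unique using hQ.existsUnique_path r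
  let f u := (path u).liftEnd step x
  have hf u : R (f u) u :=
    (path u).liftEnd_mem (R := R) (fun _ _ _ hz h => (hstep _ _ ⟨_, hz, h⟩).2) hx
  have hadj {u u'} (h : Q.Adj u u') (hpath : path u' = (path u).concat h) :
      G.Adj (f u) (f u') := by
    have hfu' : f u' = step (f u) u' := by
      simp only [f, hpath, Walk.liftEnd_concat]
    exact hfu' ▸ (hstep _ _ ⟨u, hf u, h⟩).1
  refine ⟨⟨f, fun {u u'} h => ?_⟩, ?_, hf⟩
  · rcases hQ.isAcyclic.eq_concat_or_eq_concat (path_isPath u) (path_isPath u') h with h' | h'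
    · exact hadj h h'
    · exact (hadj h.symm h').symm
  · change (path r).liftEnd step x = x
    rw [← path_unique r .nil .nil]
    rfl

lemma isLift_map_top {H : SimpleGraph W} {π : V → W} {T : H.Subgraph} (hT : T.coe.IsTree)
    (f : T.coe →g G) (hf : ∀ u, π (f u) = u) :
    IsLift G H π T ((⊤ : T.coe.Subgraph).map f) := by
  have hinj : Function.Injective f := fun u u' h => Subtype.ext (by rw [← hf u, ← hf u', h])
  refine ⟨(Copy.isoToSubgraph ⟨f, hinj⟩).isTree_iff.mp hT, ⟨?_, ?_, ?_⟩, ?_⟩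
  · rintro _ ⟨u, -, rfl⟩
    exact hf u ▸ u.2
  · rintro _ ⟨u, -, rfl⟩ _ ⟨u', -, rfl⟩ h
    rw [Subtype.ext (by rwa [hf, hf] at h : (u : W) = u')]
  · intro w hw
    exact ⟨f ⟨w, hw⟩, ⟨_, trivial, rfl⟩, hf _⟩
  · rintro _ _ ⟨u, -, rfl⟩ ⟨u', -, rfl⟩
    simp only [Subgraph.map_adj, Relation.Map, Subgraph.top_adj, hinj.eq_iff,
      exists_eq_right_right, exists_eq_right, hf, Subgraph.coe_adj]

end TreeLifting

section QuotientGraph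

open scoped Pointwise

variable {Γ : Type*} [Group Γ] [MulAction Γ V] {G : SimpleGraph V}

def smulIso (haut : ∀ (g : Γ) (x y : V), G.Adj (g • x) (g • y) ↔ G.Adj x y) (g : Γ) :
    G ≃g G :=
  ⟨MulAction.toPerm g, haut g _ _⟩

lemma quotientGraph_adj_exists_adj
    (haut : ∀ (g : Γ) (x y : V), G.Adj (g • x) (g • y) ↔ G.Adj x y) {z : V}
    {b : Quotient (MulAction.orbitRel Γ V)} (h : (quotientGraph G Γ).Adj (Quotient.mk _ z) b) :
    ∃ z', G.Adj z z' ∧ Quotient.mk (MulAction.orbitRel Γ V) z' = b := by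
  obtain ⟨-, x, y, hxy, hx, rfl⟩ := h
  obtain ⟨g, rfl⟩ : x ∈ MulAction.orbit Γ z := Quotient.exact hx
  exact ⟨g⁻¹ • y, by simpa using (haut g⁻¹ (g • z) y).mpr hxy,
    Quotient.sound (MulAction.mem_orbit y g⁻¹)⟩

lemma disjoint_smul_set_of_injOn_of_free (hfree : ∀ g : Γ, g ≠ 1 → ∀ x : V, g • x ≠ x)
    {s : Set V} (hs : s.InjOn (Quotient.mk (MulAction.orbitRel Γ V))) {g : Γ} (hg : g ≠ 1) :
    Disjoint s (g • s) := by
  rw [Set.disjoint_left]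
  rintro _ hz ⟨z, hz', rfl⟩
  exact hfree g hg z (hs hz hz' (Quotient.sound ⟨g, rfl⟩))

end QuotientGraph

theorem quotientMap_hasDisjointTreeLifting_general {V : Type*} {Γ : Type*} [Group Γ]
    [MulAction Γ V] (G : SimpleGraph V)
    (haut : ∀ (g : Γ) (x y : V), G.Adj (g • x) (g • y) ↔ G.Adj x y)
    (hfree : ∀ g : Γ, g ≠ 1 → ∀ x : V, g • x ≠ x) :
    HasDisjointTreeLifting G (quotientGraph G Γ)
      (fun x => Quotient.mk (MulAction.orbitRel Γ V) x) := by
  intro T hT x y hxy hxy' hx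
  obtain ⟨f, hfx, hf⟩ := hT.exists_hom_lift (fun z u => Quotient.mk _ z = u.1)
    (fun _ _ _ hz h => quotientGraph_adj_exists_adj haut (hz ▸ T.adj_sub h))
    (r := ⟨_, hx⟩) rfl
  obtain ⟨g, rfl⟩ : y ∈ MulAction.orbit Γ x := Quotient.exact hxy'.symm
  have hg : g ≠ 1 := by rintro rfl; exact hxy (one_smul Γ x).symm
  let f' := (smulIso haut g).toHom.comp f
  have hf' u : Quotient.mk (MulAction.orbitRel Γ V) (f' u) = u :=
    (Quotient.sound (MulAction.mem_orbit _ g)).trans (hf u)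
  have hTx := isLift_map_top hT f hf
  have hTy : ((⊤ : T.coe.Subgraph).map f').verts =
      (g • ·) '' ((⊤ : T.coe.Subgraph).map f).verts := Set.image_comp (g • ·) f _
  refine ⟨_, _, hTx, isLift_map_top hT f' hf', ⟨_, trivial, hfx⟩,
    ⟨_, trivial, congrArg (g • ·) hfx⟩, hTy ▸ ?_⟩
  exact disjoint_smul_set_of_injOn_of_free hfree hTx.2.1.injOn hg

/-- **Lemma (free actions give disjoint tree-lifting).**
If a group `Γ` acts freely on `V(G)` by graph automorphisms, then the quotient map
`x ↦ Γx` onto the quotient graph `G/Γ` has the disjoint tree-lifting property. -/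
theorem quotientMap_hasDisjointTreeLifting {V : Type*} {Γ : Type*} [Group Γ]
    [MulAction Γ V] (G : SimpleGraph V)
    (hconn : G.Connected) (hlf : LocallyFinite' G)
    (haut : ∀ (g : Γ) (x y : V), G.Adj (g • x) (g • y) ↔ G.Adj x y)
    (hfree : ∀ g : Γ, g ≠ 1 → ∀ x : V, g • x ≠ x) :
    HasDisjointTreeLifting G (quotientGraph G Γ)
      (fun x => Quotient.mk (MulAction.orbitRel Γ V) x) :=
  quotientMap_hasDisjointTreeLifting_general G haut hfree

end Percolation
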